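/- arXiv:2207.07470 — 3 statements merged into one kernel-verified Lean document; each statement's English description precedes it below -/
import Mathlib

section
/- Let g : ℝᵐ → ℝ ∪ {∞} be a polyhedral function and (z̄, λ̄) ∈ gph ∂g. Then the regular (Fréchet) normal cone to gph ∂g at (z̄, λ̄) equals K* × K, where K = K_g(z̄, λ̄) is the critical cone and K* its polar. -/
open Filter Topology Set Metric

noncomputable section

/-- A polyhedral convex set: a finite intersection of closed half-spaces. -/
def IsPolyhedralSet {E : Type*} [AddCommGroup E] [Module ℝ E] (C : Set E) : Prop :=
  ∃ (s : ℕ) (b : Fin s → (E →ₗ[ℝ] ℝ)) (β : Fin s → ℝ), C = {x | ∀ i, b i x ≤ β i}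

/-- A polyhedral function: proper (never `⊥`, somewhere finite) with polyhedral epigraph. -/
def IsPolyhedralFn {E : Type*} [AddCommGroup E] [Module ℝ E] (g : E → EReal) : Prop :=
  (∃ z, g z ≠ ⊤) ∧ (∀ z, g z ≠ ⊥) ∧
    IsPolyhedralSet {p : E × ℝ | g p.1 ≤ (p.2 : EReal)}

/-- Tangent cone to a convex set: closure of the cone of feasible directions. -/
def tcone {E : Type*} [NormedAddCommGroup E] [NormedSpace ℝ E] (C : Set E) (x : E) : Set E :=
  closure {w | ∃ t : ℝ, 0 < t ∧ x + t • w ∈ C}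

/-- Convex subdifferential of an extended-real-valued function. -/
def subdiff {E : Type*} [NormedAddCommGroup E] [InnerProductSpace ℝ E]
    (g : E → EReal) (z : E) : Set E :=
  {v | ∀ x, g z + ((inner ℝ v (x - z) : ℝ) : EReal) ≤ g x}

/-- Subderivative: `dg(z)(w) = liminf_{t↓0, w'→w} (g(z+tw')-g(z))/t`. -/
def subderiv {E : Type*} [NormedAddCommGroup E] [NormedSpace ℝ E]
    (g : E → EReal) (z : E) (w : E) : EReal :=
  Filter.liminf (fun p : ℝ × E => (g (z + p.1 • p.2) - g z) * (((p.1)⁻¹ : ℝ) : EReal))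
    ((nhdsWithin 0 (Set.Ioi (0 : ℝ))) ×ˢ 𝓝 w)

/-- Critical cone `K_g(z,v) = {w | dg(z)(w) = ⟨v,w⟩}`. -/
def Kcone {E : Type*} [NormedAddCommGroup E] [InnerProductSpace ℝ E]
    (g : E → EReal) (z v : E) : Set E :=
  {w | subderiv g z w = ((inner ℝ v w : ℝ) : EReal)}

/-- Normal cone of convex analysis. -/
def ncone {E : Type*} [NormedAddCommGroup E] [InnerProductSpace ℝ E]
    (C : Set E) (x : E) : Set E :=
  {v | ∀ y ∈ C, (inner ℝ v (y - x) : ℝ) ≤ 0}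

/-- A set is a linear subspace. -/
def IsLinSubspace {E : Type*} [AddCommGroup E] [Module ℝ E] (K : Set E) : Prop :=
  ∃ S : Submodule ℝ E, K = ↑S

/-- Polar cone. -/
def polarCone {E : Type*} [NormedAddCommGroup E] [InnerProductSpace ℝ E] (K : Set E) : Set E :=
  {u | ∀ w ∈ K, (inner ℝ u w : ℝ) ≤ 0}

/-- Fenchel conjugate. -/
def fconj {E : Type*} [NormedAddCommGroup E] [InnerProductSpace ℝ E]
    (g : E → EReal) (v : E) : EReal :=
  ⨆ z, ((inner ℝ v z : ℝ) : EReal) - g z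

/-- Bouligand (contingent) tangent cone, via sequences. -/
def btcone {E : Type*} [NormedAddCommGroup E] [NormedSpace ℝ E] (Ω : Set E) (x : E) : Set E :=
  {w | ∃ (t : ℕ → ℝ) (v : ℕ → E), (∀ n, 0 < t n) ∧ Tendsto t atTop (𝓝 0) ∧
      Tendsto v atTop (𝓝 w) ∧ ∀ n, x + t n • v n ∈ Ω}

/-- Clarke (regular) tangent cone, via sequences. -/
def clarkeT {E : Type*} [NormedAddCommGroup E] [NormedSpace ℝ E] (Ω : Set E) (xb : E) : Set E :=
  {w | ∀ (x : ℕ → E) (t : ℕ → ℝ), (∀ n, x n ∈ Ω) → Tendsto x atTop (𝓝 xb) →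
      (∀ n, 0 < t n) → Tendsto t atTop (𝓝 0) →
      ∃ v : ℕ → E, Tendsto v atTop (𝓝 w) ∧ ∀ n, x n + t n • v n ∈ Ω}

/-- Paratingent cone, via sequences. -/
def paraT {E : Type*} [NormedAddCommGroup E] [NormedSpace ℝ E] (Ω : Set E) (xb : E) : Set E :=
  {w | ∃ (x : ℕ → E) (t : ℕ → ℝ) (v : ℕ → E), (∀ n, x n ∈ Ω) ∧ Tendsto x atTop (𝓝 xb) ∧
      (∀ n, 0 < t n) ∧ Tendsto t atTop (𝓝 0) ∧ Tendsto v atTop (𝓝 w) ∧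
      ∀ n, x n + t n • v n ∈ Ω}

/-!
The regular normal cone is the polar of the tangent cone `T` to `gph ∂g` at `(z̄, λ̄)`. For any
`g`, a tangent direction `(w₁, w₂)` has `w₁ ∈ K`, since along the defining sequence the
subgradient inequality bounds the difference quotients of `g` by `⟪λ̄, w₁⟫ + o(1)`; and
`w₂ ∈ K*`, by monotonicity of `∂g` against the graph points `(z̄ + t w, λ̄)`, which exist for
`w ∈ K` and small `t > 0` when `g` is polyhedral. For polyhedral `g` the critical cone is cut out
by the epigraph constraints active at `(z̄, g z̄)`: `K = {w | b i (w, ⟪λ̄, w⟫) ≤ 0, i active}`.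
Hence `K × {0} ⊆ T`, and for each active `i` the vector `uᵢ` representing
`w ↦ b i (w, ⟪λ̄, w⟫)` has `λ̄ + t uᵢ ∈ ∂g z̄` for small `t > 0`, so `(0, uᵢ) ∈ T`. Testing a
normal `(v₁, v₂)` against these directions gives `v₁ ∈ K*` and `v₂ ∈ K`, with no bipolar theorem.
-/

open scoped RealInnerProductSpace

theorem EReal.sub_coe_mul_inv_le_coe_iff {x : EReal} {γ μ t : ℝ} (ht : 0 < t) :
    (x - γ) * ((t⁻¹ : ℝ) : EReal) ≤ μ ↔ x ≤ ((γ + t * μ : ℝ) : EReal) := by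
  induction x with
  | bot => simp [EReal.bot_mul_of_pos, ht]
  | coe x =>
    rw [← EReal.coe_sub, ← EReal.coe_mul, EReal.coe_le_coe_iff, EReal.coe_le_coe_iff,
      ← div_eq_mul_inv, div_le_iff₀ ht]
    constructor <;> intro h <;> linarith
  | top => simp [EReal.top_mul_of_pos, ht, -EReal.coe_add, -EReal.coe_mul]

theorem EReal.coe_le_sub_coe_mul_inv_iff {x : EReal} {γ μ t : ℝ} (ht : 0 < t) :
    (μ : EReal) ≤ (x - γ) * ((t⁻¹ : ℝ) : EReal) ↔ ((γ + t * μ : ℝ) : EReal) ≤ x := by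
  induction x with
  | bot => simp [EReal.bot_mul_of_pos, ht, -EReal.coe_add, -EReal.coe_mul]
  | coe x =>
    rw [← EReal.coe_sub, ← EReal.coe_mul, EReal.coe_le_coe_iff, EReal.coe_le_coe_iff,
      ← div_eq_mul_inv, le_div_iff₀ ht]
    constructor <;> intro h <;> linarith
  | top => simp [EReal.top_mul_of_pos, ht]

theorem mem_btcone_of_eventually {E : Type*} [NormedAddCommGroup E] [NormedSpace ℝ E]
    {Ω : Set E} {x w : E} (h : ∀ᶠ t in 𝓝[>] (0 : ℝ), x + t • w ∈ Ω) : w ∈ btcone Ω x := by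
  have hseq : Tendsto (fun n : ℕ => 1 / ((n : ℝ) + 1)) atTop (𝓝[>] 0) :=
    tendsto_nhdsWithin_iff.2 ⟨tendsto_one_div_add_atTop_nhds_zero_nat,
      Eventually.of_forall fun n => mem_Ioi.2 (by positivity)⟩
  obtain ⟨N, hN⟩ := eventually_atTop.1 (hseq.eventually h)
  refine ⟨fun n => 1 / (((n + N : ℕ) : ℝ) + 1), fun _ => w, fun n => by positivity,
    ?_, tendsto_const_nhds, fun n => hN _ (Nat.le_add_left N n)⟩
  exact (tendsto_add_atTop_iff_nat N).2 (tendsto_nhdsWithin_iff.1 hseq).1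

section Subdifferential

variable {E : Type*} [NormedAddCommGroup E] [InnerProductSpace ℝ E] {g : E → EReal}
  {z lb : E} {γ : ℝ}

def graphSubdiff (g : E → EReal) : Set (E × E) :=
  {p | p.2 ∈ subdiff g p.1}

theorem ne_top_of_mem_subdiff (hl : lb ∈ subdiff g z) {x : E} (hx : g x ≠ ⊤) : g z ≠ ⊤ := by
  intro h
  have := hl x
  rw [h, EReal.top_add_coe] at this
  exact hx (top_le_iff.1 this)

theorem le_coe_add_inner_of_mem_subdiff {x y v : E} {r : ℝ} (hv : v ∈ subdiff g y)
    (hx : g x = r) : g y ≤ ((r + ⟪v, y - x⟫ : ℝ) : EReal) := by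
  have h := hv x
  rw [hx, ← EReal.le_sub_iff_add_le (.inl (EReal.coe_ne_bot _)) (.inl (EReal.coe_ne_top _)),
    ← EReal.coe_sub] at h
  rwa [show ⟪v, y - x⟫ = -⟪v, x - y⟫ by rw [← inner_neg_right, neg_sub], ← sub_eq_add_neg]

theorem inner_sub_nonneg_of_mem_subdiff {x₁ x₂ v₁ v₂ : E} {r : ℝ} (h₁ : v₁ ∈ subdiff g x₁)
    (h₂ : v₂ ∈ subdiff g x₂) (hr : g x₂ = r) : 0 ≤ ⟪v₁ - v₂, x₁ - x₂⟫ := by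
  have h := (h₂ x₁).trans (le_coe_add_inner_of_mem_subdiff h₁ hr)
  rw [hr, ← EReal.coe_add, EReal.coe_le_coe_iff] at h
  rw [inner_sub_left]
  linarith

theorem mem_subdiff_of_le (hl : lb ∈ subdiff g z) {y : E}
    (hy : g y ≤ g z + ⟪lb, y - z⟫) : lb ∈ subdiff g y := fun x =>
  calc g y + ⟪lb, x - y⟫ ≤ g z + ⟪lb, y - z⟫ + ⟪lb, x - y⟫ := add_le_add_left hy _
    _ = g z + ⟪lb, x - z⟫ := by
      rw [add_assoc, ← EReal.coe_add, ← inner_add_right, sub_add_sub_cancel']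
    _ ≤ g x := hl x

theorem inner_le_subderiv (hz : g z = γ) (hl : lb ∈ subdiff g z) (w : E) :
    ((⟪lb, w⟫ : ℝ) : EReal) ≤ subderiv g z w := by
  have hlim : Tendsto (fun p : ℝ × E => ((⟪lb, p.2⟫ : ℝ) : EReal)) (𝓝[>] 0 ×ˢ 𝓝 w)
      (𝓝 ⟪lb, w⟫) :=
    (continuous_coe_real_ereal.tendsto _).comp (tendsto_const_nhds.inner tendsto_snd)
  rw [← hlim.liminf_eq, subderiv]
  refine liminf_le_liminf ?_
  filter_upwards [tendsto_fst.eventually self_mem_nhdsWithin] with p hp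
  rw [hz, EReal.coe_le_sub_coe_mul_inv_iff hp, EReal.coe_add, ← hz]
  simpa [real_inner_smul_right] using hl (z + p.1 • p.2)

theorem subderiv_le_of_tendsto {ι : Type*} {l : Filter ι} [l.NeBot] {t f : ι → ℝ} {v : ι → E}
    {w : E} {c : ℝ} (hz : g z = γ) (ht : Tendsto t l (𝓝[>] 0)) (hv : Tendsto v l (𝓝 w))
    (hf : Tendsto f l (𝓝 c))
    (hle : ∀ᶠ i in l, g (z + t i • v i) ≤ ((γ + t i * f i : ℝ) : EReal)) :
    subderiv g z w ≤ c :=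
  calc subderiv g z w
      ≤ liminf (fun i => (g (z + t i • v i) - g z) * (((t i)⁻¹ : ℝ) : EReal)) l :=
        (ht.prodMk hv).liminf_le_liminf_comp
    _ ≤ liminf (fun i => ((f i : ℝ) : EReal)) l := by
        refine liminf_le_liminf ?_
        filter_upwards [hle, ht.eventually self_mem_nhdsWithin] with i hi hti
        rwa [hz, EReal.sub_coe_mul_inv_le_coe_iff hti]
    _ = c := ((continuous_coe_real_ereal.tendsto c).comp hf).liminf_eq

theorem fst_mem_Kcone_of_mem_btcone (hz : g z = γ) (hl : lb ∈ subdiff g z) {w₁ w₂ : E}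
    (hw : (w₁, w₂) ∈ btcone (graphSubdiff g) (z, lb)) : w₁ ∈ Kcone g z lb := by
  obtain ⟨t, v, htpos, ht, hv, hmem⟩ := hw
  refine le_antisymm ?_ (inner_le_subderiv hz hl w₁)
  have hv₁ : Tendsto (fun n => (v n).1) atTop (𝓝 w₁) := (continuous_fst.tendsto _).comp hv
  have hv₂ : Tendsto (fun n => (v n).2) atTop (𝓝 w₂) := (continuous_snd.tendsto _).comp hv
  refine subderiv_le_of_tendsto (f := fun n => ⟪lb, (v n).1⟫ + t n * ⟪(v n).2, (v n).1⟫) hz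
    (tendsto_nhdsWithin_iff.2 ⟨ht, .of_forall htpos⟩) hv₁ ?_ (.of_forall fun n => ?_)
  · simpa using tendsto_const_nhds.inner hv₁ |>.add (ht.mul (hv₂.inner hv₁))
  · have hmem' : lb + t n • (v n).2 ∈ subdiff g (z + t n • (v n).1) := hmem n
    have hval : γ + ⟪lb + t n • (v n).2, z + t n • (v n).1 - z⟫
        = γ + t n * (⟪lb, (v n).1⟫ + t n * ⟪(v n).2, (v n).1⟫) := by
      rw [add_sub_cancel_left, inner_add_left, real_inner_smul_left, real_inner_smul_right,
        real_inner_smul_right]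
      ring
    exact hval ▸ le_coe_add_inner_of_mem_subdiff hmem' hz

theorem inner_snd_nonpos_of_mem_btcone {y : E} {r : ℝ} (hy : lb ∈ subdiff g y) (hr : g y = r)
    {w₁ w₂ : E} (hw : (w₁, w₂) ∈ btcone (graphSubdiff g) (z, lb)) : ⟪w₂, y - z⟫ ≤ 0 := by
  obtain ⟨t, v, htpos, ht, hv, hmem⟩ := hw
  have hmono : ∀ n, 0 ≤ ⟪(v n).2, z + t n • (v n).1 - y⟫ := fun n => by
    have h := inner_sub_nonneg_of_mem_subdiff (hmem n) hy hr
    simp only [Prod.fst_add, Prod.smul_fst, Prod.snd_add, Prod.smul_snd, add_sub_cancel_left,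
      real_inner_smul_left] at h
    exact nonneg_of_mul_nonneg_right h (htpos n)
  have hlim : Tendsto (fun n => ⟪(v n).2, z + t n • (v n).1 - y⟫) atTop
      (𝓝 ⟪w₂, z + (0 : ℝ) • w₁ - y⟫) :=
    ((continuous_snd.tendsto _).comp hv).inner
      ((tendsto_const_nhds.add (ht.smul ((continuous_fst.tendsto _).comp hv))).sub
        tendsto_const_nhds)
  have := ge_of_tendsto' hlim hmono
  rw [zero_smul, add_zero, ← neg_sub, inner_neg_right] at this
  linarith

end Subdifferential

section Polyhedral

variable {E : Type*} [NormedAddCommGroup E] [InnerProductSpace ℝ E] {g : E → EReal}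
  {s : ℕ} {b : Fin s → E × ℝ →ₗ[ℝ] ℝ} {β : Fin s → ℝ} {z lb : E} {γ : ℝ}
  (hepi : ∀ x (r : ℝ), g x ≤ r ↔ ∀ i, b i (x, r) ≤ β i) (hz : g z = γ) (hl : lb ∈ subdiff g z)

def activeCone (b : Fin s → E × ℝ →ₗ[ℝ] ℝ) (β : Fin s → ℝ) (z lb : E) (γ : ℝ) : Set E :=
  {w | ∀ i, b i (z, γ) = β i → b i (w, ⟪lb, w⟫) ≤ 0}

include hepi in
theorem le_coe_add_mul_iff (t : ℝ) (w : E) (μ : ℝ) :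
    g (z + t • w) ≤ ((γ + t * μ : ℝ) : EReal) ↔ ∀ i, b i (z, γ) + t * b i (w, μ) ≤ β i := by
  rw [hepi]
  refine forall_congr' fun i => ?_
  rw [show ((z + t • w, γ + t * μ) : E × ℝ) = (z, γ) + t • (w, μ) by simp, map_add, map_smul,
    smul_eq_mul]

include hepi hz in
theorem eventually_le_of_mem_activeCone {w : E} (hw : w ∈ activeCone b β z lb γ) :
    ∀ᶠ t in 𝓝[>] (0 : ℝ), g (z + t • w) ≤ ((γ + t * ⟪lb, w⟫ : ℝ) : EReal) := by
  simp_rw [le_coe_add_mul_iff hepi, eventually_all]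
  intro i
  rcases ((hepi z γ).1 hz.le i).eq_or_lt with hact | hslack
  · filter_upwards [self_mem_nhdsWithin] with t ht
    nlinarith [hw i hact, mem_Ioi.1 ht]
  · have hlim : Tendsto (fun t : ℝ => b i (z, γ) + t * b i (w, ⟪lb, w⟫)) (𝓝[>] 0)
        (𝓝 (b i (z, γ))) :=
      tendsto_nhdsWithin_of_tendsto_nhds ((by fun_prop : Continuous fun t : ℝ =>
        b i (z, γ) + t * b i (w, ⟪lb, w⟫)).tendsto' 0 _ (by simp))
    exact (hlim.eventually (gt_mem_nhds hslack)).mono fun _ => le_of_lt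

include hepi hz hl in
theorem activeCone_subset_Kcone : activeCone b β z lb γ ⊆ Kcone g z lb :=
  fun w hw => le_antisymm (subderiv_le_of_tendsto hz tendsto_id tendsto_const_nhds
    tendsto_const_nhds (eventually_le_of_mem_activeCone hepi hz hw)) (inner_le_subderiv hz hl w)

include hepi hz in
theorem Kcone_subset_activeCone [FiniteDimensional ℝ E] :
    Kcone g z lb ⊆ activeCone b β z lb γ := by
  intro w hw i hact
  -- Where `dg(z)(w) < μ`, frequently `g (z + t • w') ≤ γ + t * μ` for `(t, w')` near `(0⁺, w)`,
  -- and the active constraint `i` then reads `b i (w', μ) ≤ 0`; let `w' → w`, then `μ ↓ ⟪lb, w⟫`.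
  have hcont : Continuous (b i) := LinearMap.continuous_of_finiteDimensional _
  have hμ : ∀ μ : ℝ, ⟪lb, w⟫ < μ → b i (w, μ) ≤ 0 := by
    intro μ hμ
    have hfreq := frequently_lt_of_liminf_lt (h := hw.trans_lt (EReal.coe_lt_coe_iff.2 hμ))
    have hdir : ∃ᶠ p in 𝓝[>] (0 : ℝ) ×ˢ 𝓝 w, p.2 ∈ {w' : E | b i (w', μ) ≤ 0} := by
      refine (hfreq.and_eventually (tendsto_fst.eventually self_mem_nhdsWithin)).mono ?_
      rintro ⟨t, w'⟩ ⟨hq, ht⟩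
      have h := (le_coe_add_mul_iff hepi t w' μ).1
        ((EReal.sub_coe_mul_inv_le_coe_iff ht).1 (hz ▸ hq.le)) i
      rw [hact, add_le_iff_nonpos_right] at h
      exact nonpos_of_mul_nonpos_right h ht
    exact (isClosed_le (hcont.comp (continuous_id.prodMk continuous_const)) continuous_const
      ).mem_of_frequently_of_tendsto hdir tendsto_snd
  have hlim : Tendsto (fun μ : ℝ => b i (w, μ)) (𝓝[>] ⟪lb, w⟫) (𝓝 (b i (w, ⟪lb, w⟫))) :=
    tendsto_nhdsWithin_of_tendsto_nhds
      ((hcont.comp (continuous_const.prodMk continuous_id)).tendsto _)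
  exact le_of_tendsto hlim (eventually_nhdsWithin_of_forall hμ)

include hepi hz hl in
theorem eventually_add_smul_mem_subdiff {i : Fin s} (hi : b i (z, γ) = β i) {u : E}
    (hu : ∀ w, ⟪u, w⟫ = b i (w, ⟪lb, w⟫)) :
    ∀ᶠ t in 𝓝[>] (0 : ℝ), lb + t • u ∈ subdiff g z := by
  set a := b i (0, 1)
  have hsmall : ∀ᶠ t in 𝓝[>] (0 : ℝ), t * -a < 1 :=
    (tendsto_nhdsWithin_of_tendsto_nhds ((continuous_id.mul continuous_const).tendsto' 0 0
      (by simp))).eventually (gt_mem_nhds one_pos)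
  filter_upwards [hsmall, self_mem_nhdsWithin] with t hta (ht : 0 < t) x
  by_cases htop : g x = ⊤
  · simp [htop]
  obtain ⟨ρ, hρ⟩ : ∃ ρ : ℝ, g x = ρ :=
    ⟨_, (EReal.coe_toReal htop (ne_bot_of_le_ne_bot (by simp [hz, ← EReal.coe_add]) (hl x))).symm⟩
  have hgap := hl x
  rw [hz, hρ, ← EReal.coe_add, EReal.coe_le_coe_iff] at hgap ⊢
  have hsplit : ((x - z, ⟪lb, x - z⟫) : E × ℝ)
      = (x, ρ) - (z, γ) - (ρ - γ - ⟪lb, x - z⟫) • (0, 1) := by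
    ext <;> simp
  have hux : ⟪u, x - z⟫ = b i (x, ρ) - b i (z, γ) - (ρ - γ - ⟪lb, x - z⟫) * a := by
    rw [hu, hsplit, map_sub, map_sub, map_smul, smul_eq_mul]
  have hcon := (hepi x ρ).1 hρ.le i
  rw [inner_add_left, real_inner_smul_left]
  -- `hux` and the active constraint give `⟪u, x - z⟫ ≤ -a * e` for the gap
  -- `e = ρ - γ - ⟪lb, x - z⟫ ≥ 0`, and `t * -a < 1` turns this into `t * ⟪u, x - z⟫ ≤ e`.
  nlinarith [mul_le_mul_of_nonneg_right hta.le (sub_nonneg.2 hgap),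
    mul_le_mul_of_nonneg_left hcon ht.le]

include hepi hz hl in
theorem exists_inner_eq_and_mk_mem_btcone [FiniteDimensional ℝ E] {i : Fin s}
    (hi : b i (z, γ) = β i) :
    ∃ u : E, (∀ w, ⟪u, w⟫ = b i (w, ⟪lb, w⟫)) ∧
      ((0, u) : E × E) ∈ btcone (graphSubdiff g) (z, lb) := by
  set u := (InnerProductSpace.toDual ℝ E).symm
    ((b i).comp (LinearMap.id.prod (innerₛₗ ℝ lb))).toContinuousLinearMap
  have hu : ∀ w, ⟪u, w⟫ = b i (w, ⟪lb, w⟫) := fun w => by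
    simp [u, InnerProductSpace.toDual_symm_apply]
  refine ⟨u, hu, mem_btcone_of_eventually ?_⟩
  filter_upwards [eventually_add_smul_mem_subdiff hepi hz hl hi hu] with t ht
  simpa [graphSubdiff] using ht

include hepi hz hl in
theorem eventually_mem_subdiff_of_mem_Kcone [FiniteDimensional ℝ E] {w : E}
    (hw : w ∈ Kcone g z lb) :
    ∀ᶠ t in 𝓝[>] (0 : ℝ), lb ∈ subdiff g (z + t • w) ∧
      g (z + t • w) = ((γ + t * ⟪lb, w⟫ : ℝ) : EReal) := by
  filter_upwards [eventually_le_of_mem_activeCone hepi hz (Kcone_subset_activeCone hepi hz hw)]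
    with t ht
  have hge : ((γ + t * ⟪lb, w⟫ : ℝ) : EReal) ≤ g (z + t • w) := by
    simpa [hz, real_inner_smul_right] using hl (z + t • w)
  refine ⟨mem_subdiff_of_le hl ?_, ht.antisymm hge⟩
  simpa [hz, real_inner_smul_right] using ht

include hepi hz hl in
theorem mk_zero_mem_btcone_of_mem_Kcone [FiniteDimensional ℝ E] {w : E}
    (hw : w ∈ Kcone g z lb) :
    ((w, 0) : E × E) ∈ btcone (graphSubdiff g) (z, lb) :=
  mem_btcone_of_eventually <| (eventually_mem_subdiff_of_mem_Kcone hepi hz hl hw).mono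
    fun t ht => by simpa [graphSubdiff] using ht.1

include hepi hz hl in
theorem snd_mem_polarCone_of_mem_btcone [FiniteDimensional ℝ E] {w₁ w₂ : E}
    (hw : (w₁, w₂) ∈ btcone (graphSubdiff g) (z, lb)) : w₂ ∈ polarCone (Kcone g z lb) := by
  intro w hwK
  obtain ⟨t, ⟨hsub, hval⟩, ht⟩ := ((eventually_mem_subdiff_of_mem_Kcone hepi hz hl hwK).and
    self_mem_nhdsWithin).exists
  have h := inner_snd_nonpos_of_mem_btcone hsub hval hw
  rw [add_sub_cancel_left, real_inner_smul_right] at h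
  exact nonpos_of_mul_nonpos_right h ht

end Polyhedral

/-- the regular (Fréchet) normal cone to `gph ∂g` at `(zb,lb)` is
`K* × K`, `K` the critical cone. The regular normal cone is the polar of the
(Bouligand) tangent cone. -/
theorem stmt11 {m : ℕ} (g : EuclideanSpace ℝ (Fin m) → EReal) (hg : IsPolyhedralFn g)
    (zb lb : EuclideanSpace ℝ (Fin m)) (hl : lb ∈ subdiff g zb) :
    {v : EuclideanSpace ℝ (Fin m) × EuclideanSpace ℝ (Fin m) |
        ∀ w ∈ btcone {p : EuclideanSpace ℝ (Fin m) × EuclideanSpace ℝ (Fin m) |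
            p.2 ∈ subdiff g p.1} (zb, lb),
          (inner ℝ v.1 w.1 : ℝ) + (inner ℝ v.2 w.2 : ℝ) ≤ 0} =
      (polarCone (Kcone g zb lb)) ×ˢ (Kcone g zb lb) := by
  obtain ⟨⟨z₀, hz₀⟩, hbot, s, b, β, hepi_eq⟩ := hg
  have hepi : ∀ x (r : ℝ), g x ≤ r ↔ ∀ i, b i (x, r) ≤ β i := fun x r => by
    simpa using Set.ext_iff.1 hepi_eq (x, r)
  have hz : g zb = (g zb).toReal :=
    (EReal.coe_toReal (ne_top_of_mem_subdiff hl hz₀) (hbot zb)).symm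
  ext ⟨v₁, v₂⟩
  refine ⟨fun hv => ⟨fun w hw => ?_, activeCone_subset_Kcone hepi hz hl fun i hi => ?_⟩, ?_⟩
  · simpa using hv (w, 0) (mk_zero_mem_btcone_of_mem_Kcone hepi hz hl hw)
  · obtain ⟨u, hu, hmem⟩ := exists_inner_eq_and_mk_mem_btcone hepi hz hl hi
    simpa [real_inner_comm u v₂, hu] using hv (0, u) hmem
  · rintro ⟨h₁, h₂⟩ ⟨w₁, w₂⟩ hw
    have hw₁ := h₁ w₁ (fst_mem_Kcone_of_mem_btcone hz hl hw)
    have hw₂ := snd_mem_polarCone_of_mem_btcone hepi hz hl hw v₂ h₂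
    rw [real_inner_comm] at hw₂
    exact add_nonpos hw₁ hw₂
end
end

section
/- Let C ⊆ ℝᵐ be a polyhedral convex set, x ∈ ℝᵐ, and z = P_C(x) the metric projection of x onto C. Then the projection mapping P_C is continuously differentiable on a neighborhood of x if and only if x − z ∈ ri N_C(z). -/
open Filter Topology Set Metric

noncomputable section

/-!
Write `C = {y | ∀ i, ⟪a i, y⟫ ≤ β i}`, `z = P x`, `v = x - z ∈ N := N_C(z)`, and let `S` be the span
of the normals `a i` of the constraints active at `z`. Near `z` the set `C` agrees with the cone
of directions satisfying the active constraints, which gives `span N = S = affineSpan N`.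

If `v ∈ ri N`, then for `y` near `x` the point `y - P_S (y - z)` satisfies the active constraints
with equality, and `P_S (y - z)` stays in `N`, so `P y = y - P_S (y - z)`: an affine map.

If `v` lies on the relative boundary of `N`, separation inside `S` yields a unit vector `w ∈ S`
with `⟪w, N⟫ ≥ 0` and `⟪w, v⟫ = 0`. Then `P (x - t • w) = z - t • w` for small `t > 0`, while `P`
is constant on `x + N`; so a derivative of `P` at `x` would fix `-w` and vanish on `span N ∋ w`.
-/

open scoped RealInnerProductSpace

theorem mem_intrinsicInterior_iff_eventually {E : Type*} [NormedAddCommGroup E]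
    [NormedSpace ℝ E] {s T : Set E} (hT : (affineSpan ℝ s : Set E) = T) {v : E} :
    v ∈ intrinsicInterior ℝ s ↔ v ∈ T ∧ ∀ᶠ u in 𝓝[T] v, u ∈ s := by
  subst hT
  constructor
  · rintro ⟨y, hy, rfl⟩
    exact ⟨y.2, (eventually_nhds_subtype_iff _ y (· ∈ s)).1 (mem_interior_iff_mem_nhds.1 hy)⟩
  · rintro ⟨hv, h⟩
    exact ⟨⟨v, hv⟩,
      mem_interior_iff_mem_nhds.2 ((eventually_nhds_subtype_iff _ _ (· ∈ s)).2 h), rfl⟩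

theorem HasFDerivAt.apply_eq_of_eventually_eq_add_smul {E F : Type*} [NormedAddCommGroup E]
    [NormedSpace ℝ E] [NormedAddCommGroup F] [NormedSpace ℝ F] {f : E → F} {L : E →L[ℝ] F}
    {x d : E} {e : F} (hf : HasFDerivAt f L x)
    (h : ∀ᶠ t in 𝓝[>] (0 : ℝ), f (x + t • d) = f x + t • e) : L d = e := by
  have hline : HasDerivWithinAt (fun t : ℝ => f (x + t • d)) (L d) (Ioi 0) 0 := by
    have : HasDerivAt (fun t : ℝ => x + t • d) d 0 := by
      simpa using ((hasDerivAt_id (0 : ℝ)).smul_const d).const_add x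
    exact (hf.comp_hasDerivAt_of_eq 0 this (by simp)).hasDerivWithinAt
  have hray : HasDerivWithinAt (fun t : ℝ => f x + t • e) e (Ioi 0) 0 := by
    have : HasDerivAt (fun t : ℝ => f x + t • e) e 0 := by
      simpa using ((hasDerivAt_id (0 : ℝ)).smul_const e).const_add (f x)
    exact this.hasDerivWithinAt
  exact (uniqueDiffWithinAt_Ioi 0).eq_deriv _ hline
    (hray.congr_of_eventuallyEq h (by simp))

section MetricProjection

variable {E : Type*} [NormedAddCommGroup E] [InnerProductSpace ℝ E]

def IsNearestPointMap (C : Set E) (P : E → E) : Prop :=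
  ∀ y, P y ∈ C ∧ ∀ c ∈ C, ‖y - P y‖ ≤ ‖y - c‖

variable {C : Set E} {P : E → E}

theorem mem_ncone_of_inner_sub_eq_zero {u z z' : E} (hu : u ∈ ncone C z)
    (h : ⟪u, z' - z⟫ = 0) : u ∈ ncone C z' := by
  intro c hc
  have : c - z' = (c - z) - (z' - z) := by abel
  rw [this, inner_sub_right, h, sub_zero]
  exact hu c hc

theorem add_smul_mem_ncone {z u n : E} (hu : u ∈ ncone C z) (hn : n ∈ ncone C z) {t : ℝ}
    (ht : 0 ≤ t) : u + t • n ∈ ncone C z := by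
  intro c hc
  rw [inner_add_left, real_inner_smul_left]
  linarith [hu c hc, mul_nonpos_of_nonneg_of_nonpos ht (hn c hc)]

theorem IsNearestPointMap.eq_of_sub_mem_ncone (hP : IsNearestPointMap C P) {y z : E}
    (hz : z ∈ C) (hn : y - z ∈ ncone C z) : P y = z := by
  have hinner : ⟪y - z, P y - z⟫ ≤ 0 := hn (P y) (hP y).1
  have hexpand : ‖y - P y‖ ^ 2 = ‖y - z‖ ^ 2 - 2 * ⟪y - z, P y - z⟫ + ‖P y - z‖ ^ 2 := by
    rw [← norm_sub_sq_real]; congr 2; abel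
  have hle : ‖y - P y‖ ^ 2 ≤ ‖y - z‖ ^ 2 := by gcongr; exact (hP y).2 z hz
  have : ‖P y - z‖ ^ 2 ≤ 0 := by linarith
  rw [← sub_eq_zero, ← norm_eq_zero]
  exact pow_eq_zero_iff two_ne_zero |>.1 (le_antisymm this (sq_nonneg _))

theorem IsNearestPointMap.sub_mem_ncone (hP : IsNearestPointMap C P) (hC : Convex ℝ C)
    (x : E) : x - P x ∈ ncone C (P x) := by
  have : Nonempty C := ⟨⟨P x, (hP x).1⟩⟩
  have hmin : ‖x - P x‖ = ⨅ c : C, ‖x - c‖ :=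
    le_antisymm (le_ciInf fun c => (hP x).2 c c.2)
      (ciInf_le ⟨0, forall_mem_range.2 fun _ => norm_nonneg _⟩ (⟨P x, (hP x).1⟩ : C))
  exact fun c hc => (norm_eq_iInf_iff_real_inner_le_zero hC (hP x).1).1 hmin c hc

theorem coe_innerDual_image_sub [CompleteSpace E] (C : Set E) (z : E) :
    (ProperCone.innerDual ((z - ·) '' C) : Set E) = ncone C z := by
  ext v
  simp only [SetLike.mem_coe, ProperCone.mem_innerDual, forall_mem_image, ncone, mem_ofPred_eq]
  refine forall₂_congr fun c _ => ?_
  rw [← neg_sub c z, inner_neg_left, neg_nonneg, real_inner_comm]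

end MetricProjection

namespace ProperCone

variable {E : Type*} [NormedAddCommGroup E] [InnerProductSpace ℝ E] [FiniteDimensional ℝ E]
  {K : ProperCone ℝ E} {S : Submodule ℝ E}

theorem exists_unit_mem_innerDual_inner_neg (hKS : (K : Set E) ⊆ S) {u : E} (hu : u ∈ S)
    (huK : u ∉ K) : ∃ w ∈ S, ‖w‖ = 1 ∧ w ∈ innerDual (K : Set E) ∧ ⟪u, w⟫ < 0 := by
  obtain ⟨y, hyK, hyu⟩ := K.hyperplane_separation' huK
  set p := S.starProjection y
  have hp : ∀ k ∈ S, ⟪k, p⟫ = ⟪k, y⟫ := fun k hk => by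
    rw [← S.inner_starProjection_left_eq_right, S.starProjection_eq_self_iff.2 hk]
  have hup : ⟪u, p⟫ < 0 := hp u hu ▸ hyu
  have hp0 : ‖p‖ ≠ 0 := fun h => by simp [norm_eq_zero.1 h] at hup
  refine ⟨‖p‖⁻¹ • p, S.smul_mem _ (S.starProjection_apply_mem y), ?_,
    mem_innerDual.2 fun k hk => ?_, ?_⟩
  · rw [norm_smul, norm_inv, norm_norm, inv_mul_cancel₀ hp0]
  · rw [real_inner_smul_right, hp k (hKS hk)]
    exact mul_nonneg (by positivity) (hyK k hk)
  · rw [real_inner_smul_right]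
    exact mul_neg_of_pos_of_neg (by positivity) hup

theorem exists_mem_innerDual_inner_eq_zero (hKS : (K : Set E) ⊆ S) {v : E} (hv : v ∈ K)
    (hvS : v ∈ closure ((S : Set E) \ K)) :
    ∃ w ∈ S, w ≠ 0 ∧ w ∈ innerDual (K : Set E) ∧ ⟪v, w⟫ = 0 := by
  obtain ⟨u, hu, hlim⟩ := mem_closure_iff_seq_limit.1 hvS
  choose w hwS hw1 hwK hwu using fun n =>
    exists_unit_mem_innerDual_inner_neg hKS (hu n).1 (hu n).2
  set M := sphere (0 : E) 1 ∩ (S : Set E) ∩ innerDual (K : Set E)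
  have hM : IsCompact M :=
    ((isCompact_sphere 0 1).inter_right S.closed_of_finiteDimensional).inter_right
      (innerDual _).isClosed
  obtain ⟨w₀, ⟨⟨hw₀1, hw₀S⟩, hw₀K⟩, φ, hφ, hwφ⟩ :=
    hM.tendsto_subseq fun n => ⟨⟨mem_sphere_zero_iff_norm.2 (hw1 n), hwS n⟩, hwK n⟩
  refine ⟨w₀, hw₀S, ne_zero_of_mem_unit_sphere ⟨w₀, hw₀1⟩, hw₀K, le_antisymm ?_ ?_⟩
  · exact le_of_tendsto ((hlim.comp hφ.tendsto_atTop).inner hwφ)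
      (Eventually.of_forall fun n => (hwu (φ n)).le)
  · exact mem_innerDual.1 hw₀K hv

end ProperCone

section Polyhedron

variable {E : Type*} [NormedAddCommGroup E] [InnerProductSpace ℝ E] {ι : Type*}
  (a : ι → E) (β : ι → ℝ)

def polyhedron : Set E := {y | ∀ i, ⟪a i, y⟫ ≤ β i}

def activeSpan (z : E) : Submodule ℝ E := Submodule.span ℝ (a '' {i | ⟪a i, z⟫ = β i})

theorem convex_polyhedron : Convex ℝ (polyhedron a β) := by
  simp only [polyhedron, ofPred_forall]
  exact convex_iInter fun i => convex_halfSpace_le (innerₛₗ ℝ (a i)).isLinear (β i)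

variable {a β} {z : E}

theorem mem_ncone_polyhedron {i : ι} (hi : ⟪a i, z⟫ = β i) : a i ∈ ncone (polyhedron a β) z :=
  fun y hy => by rw [inner_sub_right, hi]; linarith [hy i]

theorem eventually_mem_polyhedron [Finite ι] (hz : z ∈ polyhedron a β) :
    ∀ᶠ y in 𝓝 z, (∀ i, ⟪a i, z⟫ = β i → ⟪a i, y - z⟫ ≤ 0) → y ∈ polyhedron a β := by
  have h : ∀ i, ∀ᶠ y in 𝓝 z, ⟪a i, z⟫ = β i ∨ ⟪a i, y⟫ < β i := fun i => by
    rcases (hz i).eq_or_lt with hi | hi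
    · exact .of_forall fun _ => .inl hi
    · exact ((continuous_const.inner continuous_id).tendsto z |>.eventually_lt_const hi).mono
        fun _ => .inr
  filter_upwards [eventually_all.2 h] with y hy hact i
  rcases hy i with hi | hi
  · have := hact i hi
    rw [inner_sub_right] at this
    linarith
  · exact hi.le

theorem eventually_add_smul_mem_polyhedron [Finite ι] (hz : z ∈ polyhedron a β) {d : E}
    (hd : ∀ i, ⟪a i, z⟫ = β i → ⟪a i, d⟫ ≤ 0) :
    ∀ᶠ t in 𝓝[>] (0 : ℝ), z + t • d ∈ polyhedron a β := by
  have hlim : Tendsto (fun t : ℝ => z + t • d) (𝓝[>] 0) (𝓝 z) :=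
    tendsto_nhdsWithin_of_tendsto_nhds <| Continuous.tendsto' (by fun_prop) 0 z (by simp)
  filter_upwards [hlim.eventually (eventually_mem_polyhedron hz), self_mem_nhdsWithin]
    with t ht htpos
  refine ht fun i hi => ?_
  rw [add_sub_cancel_left, real_inner_smul_right]
  exact mul_nonpos_of_nonneg_of_nonpos (le_of_lt htpos) (hd i hi)

theorem inner_nonpos_of_mem_ncone_polyhedron [Finite ι] (hz : z ∈ polyhedron a β) {u d : E}
    (hu : u ∈ ncone (polyhedron a β) z) (hd : ∀ i, ⟪a i, z⟫ = β i → ⟪a i, d⟫ ≤ 0) :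
    ⟪u, d⟫ ≤ 0 := by
  obtain ⟨t, htC, ht⟩ :=
    ((eventually_add_smul_mem_polyhedron hz hd).and self_mem_nhdsWithin).exists
  have := hu _ htC
  rw [add_sub_cancel_left, real_inner_smul_right] at this
  exact nonpos_of_mul_nonpos_right this ht

theorem ncone_polyhedron_subset_activeSpan [Finite ι] [FiniteDimensional ℝ E]
    (hz : z ∈ polyhedron a β) : ncone (polyhedron a β) z ⊆ activeSpan a β z := by
  intro u hu
  rw [← (activeSpan a β z).orthogonal_orthogonal]
  intro p hp
  have hap : ∀ i, ⟪a i, z⟫ = β i → ⟪a i, p⟫ = 0 := fun i hi =>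
    (activeSpan a β z).inner_right_of_mem_orthogonal (Submodule.subset_span ⟨i, hi, rfl⟩) hp
  have h₁ := inner_nonpos_of_mem_ncone_polyhedron hz hu fun i hi => (hap i hi).le
  have h₂ := inner_nonpos_of_mem_ncone_polyhedron hz hu (d := -p) fun i hi => by
    rw [inner_neg_right, hap i hi, neg_zero]
  rw [inner_neg_right] at h₂
  rw [real_inner_comm]
  linarith

theorem span_ncone_polyhedron [Finite ι] [FiniteDimensional ℝ E] (hz : z ∈ polyhedron a β) :
    Submodule.span ℝ (ncone (polyhedron a β) z) = activeSpan a β z :=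
  le_antisymm (Submodule.span_le.2 (ncone_polyhedron_subset_activeSpan hz)) <|
    Submodule.span_le.2 <| image_subset_iff.2 fun _ hi =>
      Submodule.subset_span (mem_ncone_polyhedron hi)

theorem affineSpan_ncone_polyhedron [Finite ι] [FiniteDimensional ℝ E]
    (hz : z ∈ polyhedron a β) :
    (affineSpan ℝ (ncone (polyhedron a β) z) : Set E) = activeSpan a β z := by
  have h0 : (0 : E) ∈ ncone (polyhedron a β) z := fun y _ => by simp
  rw [← insert_eq_self.2 h0, affineSpan_insert_zero, span_ncone_polyhedron hz]

end Polyhedron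

section Projection

variable {E : Type*} [NormedAddCommGroup E] [InnerProductSpace ℝ E] [FiniteDimensional ℝ E]
  {ι : Type*} [Finite ι] {a : ι → E} {β : ι → ℝ} {P : E → E}

theorem IsNearestPointMap.eventuallyEq_of_eventually_mem_ncone
    (hP : IsNearestPointMap (polyhedron a β) P) {x : E}
    (h : ∀ᶠ u in 𝓝[activeSpan a β (P x)] (x - P x), u ∈ ncone (polyhedron a β) (P x)) :
    P =ᶠ[𝓝 x] fun y => y - (activeSpan a β (P x)).starProjection (y - P x) := by
  set z := P x
  set S := activeSpan a β z
  have hz : z ∈ polyhedron a β := (hP x).1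
  have hvS : S.starProjection (x - z) = x - z := S.starProjection_eq_self_iff.2 <|
    ncone_polyhedron_subset_activeSpan hz (hP.sub_mem_ncone (convex_polyhedron a β) x)
  have hcont : Continuous fun y => S.starProjection (y - z) := by fun_prop
  have hA : Tendsto (fun y => y - S.starProjection (y - z)) (𝓝 x) (𝓝 z) :=
    (continuous_id.sub hcont).tendsto' x z (by rw [Pi.sub_apply, id, hvS, sub_sub_cancel])
  have hQ : Tendsto (fun y => S.starProjection (y - z)) (𝓝 x) (𝓝[S] (x - z)) :=
    tendsto_nhdsWithin_iff.2
      ⟨hvS ▸ hcont.tendsto x, .of_forall fun _ => S.starProjection_apply_mem _⟩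
  have hperp : ∀ y, y - S.starProjection (y - z) - z ∈ Sᗮ := fun y => by
    rw [sub_right_comm]; exact S.sub_starProjection_mem_orthogonal _
  filter_upwards [hA.eventually (eventually_mem_polyhedron hz), hQ.eventually h] with y hyC hyN
  refine hP.eq_of_sub_mem_ncone (hyC fun i hi => ?_) ?_
  · exact (S.inner_right_of_mem_orthogonal (Submodule.subset_span ⟨i, hi, rfl⟩) (hperp y)).le
  · rw [sub_sub_cancel]
    exact mem_ncone_of_inner_sub_eq_zero hyN
      (S.inner_right_of_mem_orthogonal (S.starProjection_apply_mem _) (hperp y))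

theorem IsNearestPointMap.eventually_mem_ncone_of_differentiableAt
    (hP : IsNearestPointMap (polyhedron a β) P) {x : E} (hd : DifferentiableAt ℝ P x) :
    ∀ᶠ u in 𝓝[activeSpan a β (P x)] (x - P x), u ∈ ncone (polyhedron a β) (P x) := by
  set z := P x
  set N := ncone (polyhedron a β) z
  set S := activeSpan a β z
  have hz : z ∈ polyhedron a β := (hP x).1
  have hv : x - z ∈ N := hP.sub_mem_ncone (convex_polyhedron a β) x
  by_contra hri
  set K := ProperCone.innerDual ((z - ·) '' polyhedron a β)
  have hK : (K : Set E) = N := coe_innerDual_image_sub _ _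
  have hvS : x - z ∈ closure ((S : Set E) \ K) := by
    rw [hK, mem_closure_iff_frequently]
    exact (frequently_nhdsWithin_iff.1 (not_eventually.1 hri)).mono fun u hu => ⟨hu.2, hu.1⟩
  obtain ⟨w, hwS, hw0, hwK, hvw⟩ := K.exists_mem_innerDual_inner_eq_zero
    (hK ▸ ncone_polyhedron_subset_activeSpan hz) (show x - z ∈ (K : Set E) from hK ▸ hv) hvS
  have hL := hd.hasFDerivAt
  have hker : S ≤ LinearMap.ker (fderiv ℝ P x : E →ₗ[ℝ] E) := by
    rw [← show Submodule.span ℝ N = S from span_ncone_polyhedron hz, Submodule.span_le]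
    intro n hn
    refine LinearMap.mem_ker.2 (hL.apply_eq_of_eventually_eq_add_smul ?_)
    filter_upwards [self_mem_nhdsWithin] with t ht
    rw [smul_zero, add_zero]
    refine hP.eq_of_sub_mem_ncone hz ?_
    rw [add_sub_right_comm]
    exact add_smul_mem_ncone hv hn (le_of_lt ht)
  have hfix : fderiv ℝ P x (-w) = -w := by
    refine hL.apply_eq_of_eventually_eq_add_smul ?_
    have hd : ∀ i, ⟪a i, z⟫ = β i → ⟪a i, -w⟫ ≤ 0 := fun i hi => by
      rw [inner_neg_right, neg_nonpos]
      exact ProperCone.mem_innerDual.1 hwK (hK ▸ mem_ncone_polyhedron hi)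
    filter_upwards [eventually_add_smul_mem_polyhedron hz hd] with t ht
    refine hP.eq_of_sub_mem_ncone ht ?_
    rw [add_sub_add_right_eq_sub]
    refine mem_ncone_of_inner_sub_eq_zero hv ?_
    rw [add_sub_cancel_left, real_inner_smul_right, inner_neg_right, hvw, neg_zero, mul_zero]
  exact hw0 (neg_eq_zero.1 (hfix ▸ hker (S.neg_mem hwS)))

end Projection

theorem IsPolyhedralSet.exists_eq_polyhedron {E : Type*} [NormedAddCommGroup E]
    [InnerProductSpace ℝ E] [FiniteDimensional ℝ E] {C : Set E} (hC : IsPolyhedralSet C) :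
    ∃ (s : ℕ) (a : Fin s → E) (β : Fin s → ℝ), C = polyhedron a β := by
  obtain ⟨s, b, β, rfl⟩ := hC
  refine ⟨s, fun i => (InnerProductSpace.toDual ℝ E).symm (b i).toContinuousLinearMap, β, ?_⟩
  simp [polyhedron, InnerProductSpace.toDual_symm_apply]

theorem stmt15_general {m : ℕ} (C : Set (EuclideanSpace ℝ (Fin m)))
    (hC : IsPolyhedralSet C)
    (P : EuclideanSpace ℝ (Fin m) → EuclideanSpace ℝ (Fin m))
    (hP : ∀ y, P y ∈ C ∧ ∀ c ∈ C, ‖y - P y‖ ≤ ‖y - c‖)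
    (x : EuclideanSpace ℝ (Fin m)) :
    (∃ U ∈ 𝓝 x, ContDiffOn ℝ 1 P U) ↔
      x - P x ∈ intrinsicInterior ℝ (ncone C (P x)) := by
  obtain ⟨s, a, β, rfl⟩ := hC.exists_eq_polyhedron
  have hP : IsNearestPointMap (polyhedron a β) P := hP
  have hz := (hP x).1
  rw [mem_intrinsicInterior_iff_eventually (affineSpan_ncone_polyhedron hz)]
  constructor
  · rintro ⟨U, hU, hPU⟩
    exact ⟨ncone_polyhedron_subset_activeSpan hz (hP.sub_mem_ncone (convex_polyhedron a β) x),
      hP.eventually_mem_ncone_of_differentiableAt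
        ((hPU.contDiffAt hU).differentiableAt one_ne_zero)⟩
  · rintro ⟨-, hN⟩
    refine ⟨_, hP.eventuallyEq_of_eventually_mem_ncone hN, ContDiffOn.congr ?_ fun y hy => hy⟩
    exact ContDiff.contDiffOn (by fun_prop)

/-- the metric projection onto a polyhedral convex set is `C¹` on a
neighborhood of `x` iff `x − P_C(x) ∈ ri N_C(P_C(x))`. -/
theorem stmt15 {m : ℕ} (C : Set (EuclideanSpace ℝ (Fin m)))
    (hC : IsPolyhedralSet C) (hne : C.Nonempty)
    (P : EuclideanSpace ℝ (Fin m) → EuclideanSpace ℝ (Fin m))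
    (hP : ∀ y, P y ∈ C ∧ ∀ c ∈ C, ‖y - P y‖ ≤ ‖y - c‖)
    (x : EuclideanSpace ℝ (Fin m)) :
    (∃ U ∈ 𝓝 x, ContDiffOn ℝ 1 P U) ↔
      x - P x ∈ intrinsicInterior ℝ (ncone C (P x)) :=
  stmt15_general C hC P hP x
end
end

section
/- (Sum rule for strict graphical derivatives.) Let f : ℝⁿ → ℝᵐ be continuously differentiable around x̄ and F : ℝⁿ ⇉ ℝᵐ with ȳ ∈ F(x̄). Then D_*(f+F)(x̄, f(x̄)+ȳ)(w) = ∇f(x̄)w + D_*F(x̄, ȳ)(w) for all w ∈ ℝⁿ; moreover F is strictly proto-differentiable at x̄ for ȳ if and only if f + F is strictly proto-differentiable at x̄ for f(x̄) + ȳ. -/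
open Filter Topology Set Metric

noncomputable section

/-!
The graph of `f + Φ` is the image of the graph of `Φ` under the shear `(x, y) ↦ (x, f x + y)`,
a bijection with continuous inverse near `(xb, f xb + yb)` that is strictly differentiable
there with invertible derivative `(w, u) ↦ (w, f' w + u)`. Strict differentiability is exactly
what makes difference quotients `(e (z + t v) - e z) / t` converge to `e' w` uniformly in the
base point `z → zb`, so such a map carries both the Clarke and the paratingent cone of a set
onto the corresponding cone of its image through `e'`.
-/

section TangentCones

variable {G H : Type*} [NormedAddCommGroup G] [NormedSpace ℝ G]
    [NormedAddCommGroup H] [NormedSpace ℝ H]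

open Asymptotics in
theorem HasStrictFDerivAt.tendsto_inv_smul_sub {e : G → H} {e' : G →L[ℝ] H} {zb w : G}
    (he : HasStrictFDerivAt e e' zb) {z v : ℕ → G} {t : ℕ → ℝ} (ht : ∀ n, t n ≠ 0)
    (hz : Tendsto z atTop (𝓝 zb)) (ht0 : Tendsto t atTop (𝓝 0))
    (hv : Tendsto v atTop (𝓝 w)) :
    Tendsto (fun n => (t n)⁻¹ • (e (z n + t n • v n) - e (z n))) atTop (𝓝 (e' w)) := by
  have hstep : Tendsto (fun n => t n • v n) atTop (𝓝 0) := by simpa using ht0.smul hv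
  have hpair : Tendsto (fun n => (z n + t n • v n, z n)) atTop (𝓝 (zb, zb)) := by
    simpa using (hz.add hstep).prodMk_nhds hz
  have hrem : (fun n => e (z n + t n • v n) - e (z n) - e' (t n • v n)) =o[atTop]
      (fun n => t n • v n) := by
    simpa [Function.comp_def] using he.isLittleO.comp_tendsto hpair
  have hstep_le : (fun n => t n • v n) =O[atTop] t := by
    simpa using (isBigO_refl t atTop).smul (hv.isBigO_one ℝ)
  have hquot := (hrem.trans_isBigO hstep_le).tendsto_inv_smul_nhds_zero.add
    ((e'.continuous.tendsto w).comp hv)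
  rw [zero_add] at hquot
  refine hquot.congr fun n => ?_
  simp only [Function.comp_apply, map_smul, smul_sub, smul_smul, inv_mul_cancel₀ (ht n),
    one_smul, sub_add_cancel]

variable {Ω : Set G} {zb w : G}

theorem HasStrictFDerivAt.map_mem_paraT {e : G → H} {e' : G →L[ℝ] H}
    (he : HasStrictFDerivAt e e' zb) (hw : w ∈ paraT Ω zb) :
    e' w ∈ paraT (e '' Ω) (e zb) := by
  obtain ⟨z, t, v, hzΩ, hz, ht, ht0, hv, hmem⟩ := hw
  refine ⟨fun n => e (z n), t, fun n => (t n)⁻¹ • (e (z n + t n • v n) - e (z n)),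
    fun n => mem_image_of_mem e (hzΩ n), he.continuousAt.tendsto.comp hz, ht, ht0,
    he.tendsto_inv_smul_sub (fun n => (ht n).ne') hz ht0 hv, fun n => ?_⟩
  rw [smul_smul, mul_inv_cancel₀ (ht n).ne', one_smul, add_sub_cancel]
  exact mem_image_of_mem e (hmem n)

theorem HasStrictFDerivAt.map_mem_clarkeT {e : G ≃ H} {e' : G →L[ℝ] H}
    (he : HasStrictFDerivAt e e' zb) (hsymm : ContinuousAt e.symm (e zb))
    (hw : w ∈ clarkeT Ω zb) : e' w ∈ clarkeT (e '' Ω) (e zb) := by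
  intro y t hyΩ hy ht ht0
  have hzΩ : ∀ n, e.symm (y n) ∈ Ω := fun n => by
    simpa [e.image_eq_preimage_symm] using hyΩ n
  have hz : Tendsto (fun n => e.symm (y n)) atTop (𝓝 zb) := by
    simpa [Function.comp_def] using hsymm.tendsto.comp hy
  obtain ⟨v, hv, hmem⟩ := hw _ t hzΩ hz ht ht0
  refine ⟨fun n => (t n)⁻¹ • (e (e.symm (y n) + t n • v n) - y n), ?_, fun n => ?_⟩
  · simpa using he.tendsto_inv_smul_sub (fun n => (ht n).ne') hz ht0 hv
  · rw [smul_smul, mul_inv_cancel₀ (ht n).ne', one_smul, add_sub_cancel]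
    exact mem_image_of_mem e (hmem n)

variable {e : G ≃ H} {e' : G ≃L[ℝ] H}

theorem HasStrictFDerivAt.hasStrictFDerivAt_symm
    (he : HasStrictFDerivAt e (e' : G →L[ℝ] H) zb) (hsymm : ContinuousAt e.symm (e zb)) :
    HasStrictFDerivAt e.symm (e'.symm : H →L[ℝ] G) (e zb) :=
  .of_local_left_inverse hsymm (by simpa using he) (.of_forall e.apply_symm_apply)

theorem HasStrictFDerivAt.paraT_image_eq (he : HasStrictFDerivAt e (e' : G →L[ℝ] H) zb)
    (hsymm : ContinuousAt e.symm (e zb)) : paraT (e '' Ω) (e zb) = e' '' paraT Ω zb := by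
  refine Subset.antisymm (fun u hu => ⟨e'.symm u, ?_, e'.apply_symm_apply u⟩) ?_
  · simpa [e.symm_image_image] using (he.hasStrictFDerivAt_symm hsymm).map_mem_paraT hu
  · rintro _ ⟨w, hw, rfl⟩
    exact he.map_mem_paraT hw

theorem HasStrictFDerivAt.clarkeT_image_eq (he : HasStrictFDerivAt e (e' : G →L[ℝ] H) zb)
    (hsymm : ContinuousAt e.symm (e zb)) : clarkeT (e '' Ω) (e zb) = e' '' clarkeT Ω zb := by
  refine Subset.antisymm (fun u hu => ⟨e'.symm u, ?_, e'.apply_symm_apply u⟩) ?_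
  · have hsymm' : ContinuousAt e.symm.symm (e.symm (e zb)) := by
      simpa using he.continuousAt
    simpa [e.symm_image_image] using
      (he.hasStrictFDerivAt_symm hsymm).map_mem_clarkeT hsymm' hu
  · rintro _ ⟨w, hw, rfl⟩
    exact he.map_mem_clarkeT hsymm hw

end TangentCones

section Shear

def graphShear {E F : Type*} [AddCommGroup F] (f : E → F) : E × F ≃ E × F :=
  Equiv.prodShear (Equiv.refl E) fun x => Equiv.addLeft (f x)

@[simp]
theorem graphShear_apply {E F : Type*} [AddCommGroup F] (f : E → F) (p : E × F) :
    graphShear f p = (p.1, f p.1 + p.2) := rfl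

@[simp]
theorem graphShear_symm_apply {E F : Type*} [AddCommGroup F] (f : E → F) (p : E × F) :
    (graphShear f).symm p = (p.1, -f p.1 + p.2) := rfl

theorem graphShear_image_graph {E F : Type*} [AddCommGroup F] (f : E → F) (Φ : E → Set F) :
    graphShear f '' {p | p.2 ∈ Φ p.1} = {p | p.2 - f p.1 ∈ Φ p.1} := by
  ext p
  simp [Equiv.image_eq_preimage_symm, neg_add_eq_sub]

theorem ContinuousAt.graphShear_symm {E F : Type*} [TopologicalSpace E] [TopologicalSpace F]
    [AddCommGroup F] [IsTopologicalAddGroup F] {f : E → F} {xb : E} {yb : F}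
    (hf : ContinuousAt f xb) : ContinuousAt (graphShear f).symm (xb, yb) :=
  continuousAt_fst.prodMk ((hf.comp continuousAt_fst).neg.add continuousAt_snd)

variable {E F : Type*} [NormedAddCommGroup E] [NormedSpace ℝ E]
    [NormedAddCommGroup F] [NormedSpace ℝ F]

theorem HasStrictFDerivAt.graphShear {f : E → F} {f' : E →L[ℝ] F} {xb : E} {yb : F}
    (hf : HasStrictFDerivAt f f' xb) :
    HasStrictFDerivAt (graphShear f)
      ((ContinuousLinearEquiv.refl ℝ E).skewProd (.refl ℝ F) f' : E × F →L[ℝ] E × F)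
      (xb, yb) := by
  have h : HasStrictFDerivAt (fun p : E × F => (p.1, f p.1 + p.2)) _ (xb, yb) :=
    hasStrictFDerivAt_fst.prodMk
      ((hf.comp (xb, yb) hasStrictFDerivAt_fst).add hasStrictFDerivAt_snd)
  refine h.congr_fderiv ?_
  ext <;> simp

theorem skewProd_image_slice (f' : E →L[ℝ] F) (P : Set (E × F)) (w : E) :
    {u | (w, u) ∈ (ContinuousLinearEquiv.refl ℝ E).skewProd (.refl ℝ F) f' '' P} =
      (fun u => f' w + u) '' {u | (w, u) ∈ P} := by
  ext u
  simp [← eq_sub_iff_add_eq, neg_add_eq_sub]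

end Shear

theorem stmt17_general {n k : ℕ}
    (f : EuclideanSpace ℝ (Fin n) → EuclideanSpace ℝ (Fin k))
    (Φ : EuclideanSpace ℝ (Fin n) → Set (EuclideanSpace ℝ (Fin k)))
    (xb : EuclideanSpace ℝ (Fin n)) (yb : EuclideanSpace ℝ (Fin k))
    (hf : ContDiffAt ℝ 1 f xb) :
    (∀ w : EuclideanSpace ℝ (Fin n),
      {u | (w, u) ∈ paraT {p : EuclideanSpace ℝ (Fin n) × EuclideanSpace ℝ (Fin k) |
          p.2 - f p.1 ∈ Φ p.1} (xb, f xb + yb)} =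
      (fun u => fderiv ℝ f xb w + u) ''
        {u | (w, u) ∈ paraT {p : EuclideanSpace ℝ (Fin n) × EuclideanSpace ℝ (Fin k) |
          p.2 ∈ Φ p.1} (xb, yb)}) ∧
    ((clarkeT {p : EuclideanSpace ℝ (Fin n) × EuclideanSpace ℝ (Fin k) |
          p.2 ∈ Φ p.1} (xb, yb) =
        paraT {p : EuclideanSpace ℝ (Fin n) × EuclideanSpace ℝ (Fin k) |
          p.2 ∈ Φ p.1} (xb, yb)) ↔
      (clarkeT {p : EuclideanSpace ℝ (Fin n) × EuclideanSpace ℝ (Fin k) |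
          p.2 - f p.1 ∈ Φ p.1} (xb, f xb + yb) =
        paraT {p : EuclideanSpace ℝ (Fin n) × EuclideanSpace ℝ (Fin k) |
          p.2 - f p.1 ∈ Φ p.1} (xb, f xb + yb))) := by
  have hshear := (hf.hasStrictFDerivAt one_ne_zero).graphShear (yb := yb)
  have hsymm := hf.continuousAt.graphShear_symm (yb := f xb + yb)
  rw [← graphShear_apply f (xb, yb)] at hsymm
  have hpara := hshear.paraT_image_eq hsymm (Ω := {p | p.2 ∈ Φ p.1})
  have hclarke := hshear.clarkeT_image_eq hsymm (Ω := {p | p.2 ∈ Φ p.1})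
  simp only [graphShear_image_graph, graphShear_apply] at hpara hclarke
  refine ⟨fun w => ?_, ?_⟩
  · rw [hpara, skewProd_image_slice]
  · rw [hpara, hclarke, (ContinuousLinearEquiv.injective _).image_injective.eq_iff]

/-- sum rule for strict graphical derivatives: for `f` continuously
differentiable around `xb` and a set-valued map `Φ` with `yb ∈ Φ xb`,
`D_*(f+Φ)(xb, f xb + yb)(w) = ∇f(xb)w + D_*Φ(xb,yb)(w)` (strict graphical
derivatives given by paratingent cones to graphs), and `Φ` is strictly
proto-differentiable at `xb` for `yb` iff `f + Φ` is strictly proto-differentiable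
at `xb` for `f xb + yb` (Clarke tangent cone = paratingent cone of the graph). -/
theorem stmt17 {n k : ℕ}
    (f : EuclideanSpace ℝ (Fin n) → EuclideanSpace ℝ (Fin k))
    (Φ : EuclideanSpace ℝ (Fin n) → Set (EuclideanSpace ℝ (Fin k)))
    (xb : EuclideanSpace ℝ (Fin n)) (yb : EuclideanSpace ℝ (Fin k))
    (hf : ContDiffAt ℝ 1 f xb) (hy : yb ∈ Φ xb) :
    (∀ w : EuclideanSpace ℝ (Fin n),
      {u | (w, u) ∈ paraT {p : EuclideanSpace ℝ (Fin n) × EuclideanSpace ℝ (Fin k) |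
          p.2 - f p.1 ∈ Φ p.1} (xb, f xb + yb)} =
      (fun u => fderiv ℝ f xb w + u) ''
        {u | (w, u) ∈ paraT {p : EuclideanSpace ℝ (Fin n) × EuclideanSpace ℝ (Fin k) |
          p.2 ∈ Φ p.1} (xb, yb)}) ∧
    ((clarkeT {p : EuclideanSpace ℝ (Fin n) × EuclideanSpace ℝ (Fin k) |
          p.2 ∈ Φ p.1} (xb, yb) =
        paraT {p : EuclideanSpace ℝ (Fin n) × EuclideanSpace ℝ (Fin k) |
          p.2 ∈ Φ p.1} (xb, yb)) ↔
      (clarkeT {p : EuclideanSpace ℝ (Fin n) × EuclideanSpace ℝ (Fin k) |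
          p.2 - f p.1 ∈ Φ p.1} (xb, f xb + yb) =
        paraT {p : EuclideanSpace ℝ (Fin n) × EuclideanSpace ℝ (Fin k) |
          p.2 - f p.1 ∈ Φ p.1} (xb, f xb + yb))) :=
  stmt17_general f Φ xb yb hf
end
end
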